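/- Let P be a very ample lattice polytope. If P is not normal, then k_P ≥ m_P ≥ d_P + 1. -/

import Mathlib

open Finset Pointwise

noncomputable section

/-- Lattice points: `ZL N = ℤ^N`. -/
abbrev ZL (N : ℕ) := Fin N → ℤ

/-- Embedding of the lattice into `ℝ^N`. -/
def toR {N : ℕ} (x : ZL N) : Fin N → ℝ := fun i => (x i : ℝ)

/-- The lattice polytope spanned by a finite set `V` of lattice points. -/
def poly {N : ℕ} (V : Finset (ZL N)) : Set (Fin N → ℝ) :=
  convexHull ℝ (toR '' (V : Set (ZL N)))

/-- The lattice points of the dilate `k • P`. -/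
def latPts {N : ℕ} (V : Finset (ZL N)) (k : ℕ) : Set (ZL N) :=
  {x | toR x ∈ (k : ℝ) • poly V}

/-- `P` is `k`-normal: every lattice point of `kP` is a sum of `k` lattice points of `P`. -/
def kNormal {N : ℕ} (V : Finset (ZL N)) (k : ℕ) : Prop :=
  ∀ x ∈ latPts V k, ∃ f : Fin k → ZL N, (∀ i, f i ∈ latPts V 1) ∧ ∑ i, f i = x

/-- `P` is normal. -/
def NormalPoly {N : ℕ} (V : Finset (ZL N)) : Prop := ∀ k, 1 ≤ k → kNormal V k

/-- The set of which `d_P` is the least element. -/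
def dSet {N : ℕ} (V : Finset (ZL N)) : Set ℕ :=
  {n | 0 < n ∧ ∀ k ≥ n, latPts V (k + 1) = latPts V 1 + latPts V k}

/-- The set of which the `k`-normality threshold `k_P` is the least element. -/
def kSet {N : ℕ} (V : Finset (ZL N)) : Set ℕ :=
  {K | 0 < K ∧ ∀ k ≥ K, kNormal V k}

/-- The set of which `ν_P` is the least element. -/
def nuSet {N : ℕ} (V : Finset (ZL N)) : Set ℕ :=
  {n | 0 < n ∧ ∀ k ≥ n, latPts V (k + 1) = (V : Set (ZL N)) + latPts V k}

/-- `v` is a vertex of `P`. -/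
def IsVertex {N : ℕ} (V : Finset (ZL N)) (v : ZL N) : Prop :=
  v ∈ V ∧ toR v ∈ Set.extremePoints ℝ (poly V)

/-- `P` is very ample: for every vertex `v`, every lattice point of the cone
`ℝ_{≥0}(P - v)` is a finite sum of elements `w - v` with `w ∈ P ∩ M`. -/
def VeryAmple {N : ℕ} (V : Finset (ZL N)) : Prop :=
  ∀ v, IsVertex V v → ∀ u : ZL N,
    (∃ c : ℝ, 0 ≤ c ∧ ∃ p ∈ poly V, toR u = c • (p - toR v)) →
    ∃ (m : ℕ) (w : Fin m → ZL N), (∀ i, w i ∈ latPts V 1) ∧ u = ∑ i, (w i - v)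

/-- The set of numbers `m` such that `x - d_P v` is a sum of `m` elements of `(P ∩ M) - v`;
`σ(x, d_P v)` is its least element. -/
def sigmaSet {N : ℕ} (V : Finset (ZL N)) (dP : ℕ) (x v : ZL N) : Set ℕ :=
  {m | ∃ w : Fin m → ZL N, (∀ i, w i ∈ latPts V 1) ∧ x - dP • v = ∑ i, (w i - v)}

/-- The set of all values `σ(x, d_P v)`; `m_P` is its greatest element. -/
def mSet {N : ℕ} (V : Finset (ZL N)) (dP : ℕ) : Set ℕ :=
  {s | ∃ x ∈ latPts V dP, ∃ v, IsVertex V v ∧ IsLeast (sigmaSet V dP x v) s}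

end

/-!
Very ampleness makes every `σ(x, d_P v)` defined. If all of them were at most `d_P`, then every
lattice point `x` of `d_P P` would be `∑ w_i + (d_P - σ) v`, a sum of `d_P` lattice points of `P`;
hence `d_P P ∩ M` would split as `(P ∩ M) + ((d_P - 1) P ∩ M)` and `d_P - 1` would already qualify for `d_P`, which is impossible
since non-normality forces `d_P ≥ 2`. On the other hand, for `k ≥ max k_P d_P` the point
`x + (k - d_P) v` lies in `k P`, so `k`-normality writes it as a sum of `k` lattice points of `P`,
giving `σ(x, d_P v) ≤ k`; thus `m_P ≤ max k_P d_P`, and `m_P > d_P` leaves `m_P ≤ k_P`.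
-/

lemma sum_sub_const {G : Type*} [AddCommGroup G] {n : ℕ} (w : Fin n → G) (v : G) :
    ∑ i, (w i - v) = ∑ i, w i - n • v := by
  rw [Finset.sum_sub_distrib, Fin.sum_const]

section

variable {N : ℕ} {V : Finset (ZL N)}

@[simp] lemma toR_zero : toR (0 : ZL N) = 0 := by
  funext i; simp [toR]

@[simp] lemma toR_add (a b : ZL N) : toR (a + b) = toR a + toR b := by
  funext i; simp [toR]

@[simp] lemma toR_sub (a b : ZL N) : toR (a - b) = toR a - toR b := by
  funext i; simp [toR]

@[simp] lemma toR_nsmul (n : ℕ) (a : ZL N) : toR (n • a) = (n : ℝ) • toR a := by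
  funext i; simp [toR]

lemma mem_latPts_iff {x : ZL N} {k : ℕ} :
    x ∈ latPts V k ↔ ∃ p ∈ poly V, toR x = (k : ℝ) • p := by
  show toR x ∈ (k : ℝ) • poly V ↔ _
  simp only [Set.mem_smul_set, eq_comm]

lemma poly_nonempty_of_mem_latPts {x : ZL N} {k : ℕ} (hx : x ∈ latPts V k) :
    (poly V).Nonempty := by
  obtain ⟨p, hp, -⟩ := mem_latPts_iff.1 hx
  exact ⟨p, hp⟩

lemma mem_latPts_one_of_mem {v : ZL N} (hv : v ∈ V) : v ∈ latPts V 1 :=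
  mem_latPts_iff.2 ⟨toR v, subset_convexHull ℝ _ ⟨v, hv, rfl⟩, by simp⟩

lemma add_mem_latPts {x y : ZL N} {k l : ℕ} (hx : x ∈ latPts V k) (hy : y ∈ latPts V l) :
    x + y ∈ latPts V (k + l) := by
  obtain ⟨p, hp, hxp⟩ := mem_latPts_iff.1 hx
  obtain ⟨q, hq, hyq⟩ := mem_latPts_iff.1 hy
  rcases Nat.eq_zero_or_pos (k + l) with hkl | hkl
  · obtain ⟨rfl, rfl⟩ := Nat.add_eq_zero_iff.1 hkl
    exact mem_latPts_iff.2 ⟨p, hp, by simp_all⟩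
  have hc : ((k + l : ℕ) : ℝ) ≠ 0 := by positivity
  have hmem : ((k : ℝ) / (k + l : ℕ)) • p + ((l : ℝ) / (k + l : ℕ)) • q ∈ poly V := by
    refine convex_convexHull ℝ _ hp hq (by positivity) (by positivity) ?_
    rw [← add_div, div_eq_one_iff_eq hc, Nat.cast_add]
  refine mem_latPts_iff.2 ⟨_, hmem, ?_⟩
  rw [toR_add, hxp, hyq, smul_add, smul_smul, smul_smul, mul_div_cancel₀ _ hc,
    mul_div_cancel₀ _ hc]

lemma nsmul_mem_latPts {v : ZL N} (hv : v ∈ latPts V 1) (n : ℕ) : n • v ∈ latPts V n := by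
  obtain ⟨p, hp, he⟩ := mem_latPts_iff.1 hv
  exact mem_latPts_iff.2 ⟨p, hp, by rw [toR_nsmul, he, Nat.cast_one, one_smul]⟩

lemma sum_mem_latPts (hne : (poly V).Nonempty) {n : ℕ} {f : Fin n → ZL N}
    (hf : ∀ i, f i ∈ latPts V 1) : ∑ i, f i ∈ latPts V n := by
  induction n with
  | zero =>
    obtain ⟨p, hp⟩ := hne
    exact mem_latPts_iff.2 ⟨p, hp, by simp⟩
  | succ n ih =>
    rw [Fin.sum_univ_succ]
    simpa only [Nat.add_comm 1 n] using add_mem_latPts (hf 0) (ih fun i => hf i.succ)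

lemma latPts_add_subset (k l : ℕ) : latPts V k + latPts V l ⊆ latPts V (k + l) := by
  rintro _ ⟨x, hx, y, hy, rfl⟩
  exact add_mem_latPts hx hy

lemma kNormal_succ {k : ℕ} (hk : kNormal V k)
    (hsplit : latPts V (k + 1) = latPts V 1 + latPts V k) : kNormal V (k + 1) := by
  intro x hx
  rw [hsplit] at hx
  obtain ⟨a, ha, b, hb, rfl⟩ := hx
  obtain ⟨f, hf, rfl⟩ := hk b hb
  exact ⟨Fin.cons a f, Fin.cases ha hf, Fin.sum_cons a f⟩

lemma normalPoly_of_one_mem_dSet (h : 1 ∈ dSet V) : NormalPoly V := by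
  intro k hk
  induction k, hk using Nat.le_induction with
  | base => exact fun x hx => ⟨fun _ => x, fun _ => hx, by simp⟩
  | succ k hk ih => exact kNormal_succ ih (h.2 k hk)

lemma two_le_of_isLeast_dSet {d : ℕ} (hd : IsLeast (dSet V) d) (hnn : ¬ NormalPoly V) :
    2 ≤ d := by
  by_contra! hlt
  obtain rfl : d = 1 := by have := hd.1.1; omega
  exact hnn (normalPoly_of_one_mem_dSet hd.1)

lemma exists_isVertex (hne : (poly V).Nonempty) : ∃ v, IsVertex V v := by
  have hcomp : IsCompact (poly V) := (V.finite_toSet.image toR).isCompact_convexHull ℝ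
  obtain ⟨p, hp⟩ := hcomp.extremePoints_nonempty hne
  obtain ⟨v, hv, rfl⟩ := extremePoints_convexHull_subset hp
  exact ⟨v, hv, hp⟩

lemma exists_isLeast_sigmaSet (hva : VeryAmple V) {d : ℕ} {x v : ZL N}
    (hx : x ∈ latPts V d) (hv : IsVertex V v) : ∃ s, IsLeast (sigmaSet V d x v) s := by
  obtain ⟨p, hp, he⟩ := mem_latPts_iff.1 hx
  obtain ⟨m, w, hw, heq⟩ := hva v hv (x - d • v)
    ⟨d, by positivity, p, hp, by rw [toR_sub, toR_nsmul, he, smul_sub]⟩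
  have hne : (sigmaSet V d x v).Nonempty := ⟨m, w, hw, heq⟩
  exact ⟨sInf _, Nat.sInf_mem hne, fun _ hb => Nat.sInf_le hb⟩

lemma eq_sum_add_nsmul_of_mem_sigmaSet {d s : ℕ} {x v : ZL N} (hs : s ∈ sigmaSet V d x v)
    (hsd : s ≤ d) : ∃ w : Fin s → ZL N, (∀ i, w i ∈ latPts V 1) ∧ x = ∑ i, w i + (d - s) • v := by
  obtain ⟨w, hw, hsum⟩ := hs
  refine ⟨w, hw, ?_⟩
  rw [sum_sub_const, sub_eq_iff_eq_add] at hsum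
  rw [hsum, sub_add_eq_add_sub, sub_eq_iff_eq_add, add_assoc, ← add_nsmul, Nat.sub_add_cancel hsd]

lemma sum_add_nsmul_mem_add_latPts {d s : ℕ} {w : Fin s → ZL N} {v : ZL N}
    (hw : ∀ i, w i ∈ latPts V 1) (hv : v ∈ latPts V 1) (hsd : s ≤ d) (hd : 1 ≤ d) :
    ∑ i, w i + (d - s) • v ∈ latPts V 1 + latPts V (d - 1) := by
  cases s with
  | zero =>
    obtain ⟨e, rfl⟩ := Nat.exists_eq_add_of_le' hd
    refine ⟨v, hv, e • v, nsmul_mem_latPts hv e, ?_⟩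
    rw [Fin.sum_univ_zero, zero_add, Nat.sub_zero, succ_nsmul']
  | succ s =>
    have hrest := add_mem_latPts (sum_mem_latPts (poly_nonempty_of_mem_latPts hv)
      fun i => hw i.succ) (nsmul_mem_latPts hv (d - (s + 1)))
    rw [show s + (d - (s + 1)) = d - 1 by omega] at hrest
    exact ⟨w 0, hw 0, _, hrest, by rw [Fin.sum_univ_succ, add_assoc]⟩

lemma latPts_eq_add_of_forall_mem_mSet_le (hva : VeryAmple V) {d : ℕ} (hd : 1 ≤ d)
    (hm : ∀ s ∈ mSet V d, s ≤ d) : latPts V d = latPts V 1 + latPts V (d - 1) := by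
  refine subset_antisymm (fun x hx => ?_) ?_
  · obtain ⟨v, hv⟩ := exists_isVertex (poly_nonempty_of_mem_latPts hx)
    obtain ⟨s, hs⟩ := exists_isLeast_sigmaSet hva hx hv
    have hsd : s ≤ d := hm s ⟨x, hx, v, hv, hs⟩
    obtain ⟨w, hw, rfl⟩ := eq_sum_add_nsmul_of_mem_sigmaSet hs.1 hsd
    exact sum_add_nsmul_mem_add_latPts hw (mem_latPts_one_of_mem hv.1) hsd hd
  · simpa only [Nat.add_sub_cancel' hd] using latPts_add_subset (V := V) 1 (d - 1)

lemma pred_mem_dSet {d : ℕ} (hd : d ∈ dSet V) (hd2 : 2 ≤ d)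
    (hsplit : latPts V d = latPts V 1 + latPts V (d - 1)) : d - 1 ∈ dSet V := by
  refine ⟨by omega, fun k hk => ?_⟩
  rcases hk.eq_or_lt with rfl | hlt
  · rwa [Nat.sub_add_cancel (by omega : 1 ≤ d)]
  · exact hd.2 k (by omega)

lemma lt_of_mem_upperBounds_mSet (hva : VeryAmple V) {d m : ℕ} (hd : IsLeast (dSet V) d)
    (hd2 : 2 ≤ d) (hm : m ∈ upperBounds (mSet V d)) : d < m := by
  by_contra! hmd
  have hsplit := latPts_eq_add_of_forall_mem_mSet_le hva (by omega) fun s hs => (hm hs).trans hmd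
  have := hd.2 (pred_mem_dSet hd.1 hd2 hsplit)
  omega

lemma mem_sigmaSet_of_kNormal {d k : ℕ} {x v : ZL N} (hk : kNormal V k) (hdk : d ≤ k)
    (hx : x ∈ latPts V d) (hv : v ∈ latPts V 1) : k ∈ sigmaSet V d x v := by
  obtain ⟨e, rfl⟩ := Nat.exists_eq_add_of_le hdk
  obtain ⟨f, hf, hsum⟩ := hk _ (add_mem_latPts hx (nsmul_mem_latPts hv e))
  refine ⟨f, hf, ?_⟩
  rw [sum_sub_const, hsum, add_nsmul]
  abel

lemma le_max_of_mem_mSet {d K s : ℕ} (hK : K ∈ kSet V) (hs : s ∈ mSet V d) : s ≤ max K d := by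
  obtain ⟨x, hx, v, hv, hleast⟩ := hs
  exact hleast.2 <| mem_sigmaSet_of_kNormal (hK.2 _ (le_max_left K d)) (le_max_right K d) hx
    (mem_latPts_one_of_mem hv.1)

end

/-- If a very ample lattice polytope `P` is not normal, then
`k_P ≥ m_P ≥ d_P + 1`. -/
theorem stmt8 {N : ℕ} (V : Finset (ZL N)) (dP kP mP : ℕ)
    (hva : VeryAmple V)
    (hdP : IsLeast (dSet V) dP)
    (hkP : IsLeast (kSet V) kP)
    (hmP : IsGreatest (mSet V dP) mP)
    (hnn : ¬ NormalPoly V) :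
    mP ≤ kP ∧ dP + 1 ≤ mP := by
  have hdm : dP < mP := lt_of_mem_upperBounds_mSet hva hdP (two_le_of_isLeast_dSet hdP hnn) hmP.2
  have hmax : mP ≤ max kP dP := le_max_of_mem_mSet hkP.1 hmP.1
  constructor <;> omega
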